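/- arXiv:1805.00093 — 3 statements merged into one kernel-verified Lean document; each statement's English description precedes it below -/
import Mathlib

section
/- Let q be a prime power and K an algebraically closed field containing F_q. Let P(V) be the projectivization of the span of x^{q+1}, x^q, x, 1, with the PGL_2(K)-action g⋆f(x) = (cx+d)^{q+1} f((ax+b)/(cx+d)) for g = [[a,b],[c,d]]. Let S ⊆ P(V) be the quadric αδ = βγ. Then P(V) \ S is exactly the PGL_2(K)-orbit of x^q - x. -/
/-!
Identify `f = α x^(q+1) + β x^q + γ x + δ` with `N = !![α, β; γ, δ]`, so that
`f(x) = (x^q, 1) N (x, 1)ᵀ`. Then `g ⋆ f` corresponds to the twisted congruence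
`N ↦ (g^(q))ᵀ N g`, where `g^(q)` raises the entries of `g` to the `q`-th power, and `x^q - x`
corresponds to `J = symplecticMatrix = !![0, 1; -1, 0]`. The determinant is multiplied by `det(g)^(q+1)`, so the
orbit of `J` avoids the quadric `det N = 0`. Conversely, if `det N ≠ 0`, a root `r` of `f` gives
a basis vector `(r, 1)` on which the twisted form vanishes; a root `s` of the remaining
polynomial of degree `q` and a `(q-1)`-st root `u` of `-γ/β` then reduce `N` to a multiple of `J`.
-/

open Polynomial

namespace Matrix

section TwistedCongr

variable {R : Type*} [CommRing R] {m : Type*} [Fintype m] (σ : R →+* R)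

def twistedCongr (g N : Matrix m m R) : Matrix m m R := (g.map σ)ᵀ * N * g

theorem twistedCongr_mul (g h N : Matrix m m R) :
    twistedCongr σ (g * h) N = twistedCongr σ h (twistedCongr σ g N) := by
  simp only [twistedCongr, Matrix.map_mul, transpose_mul, Matrix.mul_assoc]

theorem twistedCongr_smul (g N : Matrix m m R) (t : R) :
    twistedCongr σ g (t • N) = t • twistedCongr σ g N := by
  simp only [twistedCongr, Matrix.smul_mul, Matrix.mul_smul]

variable [DecidableEq m]

theorem twistedCongr_one (N : Matrix m m R) : twistedCongr σ 1 N = N := by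
  simp [twistedCongr]

theorem det_twistedCongr (g N : Matrix m m R) :
    (twistedCongr σ g N).det = σ g.det * N.det * g.det := by
  rw [twistedCongr, det_mul, det_mul, det_transpose, σ.map_det]
  rfl

end TwistedCongr

theorem det_twistedCongr_ne_zero_iff {K : Type*} [Field K] {m : Type*} [Fintype m]
    [DecidableEq m] (σ : K →+* K) {g : Matrix m m K} (hg : g.det ≠ 0) (N : Matrix m m K) :
    (twistedCongr σ g N).det ≠ 0 ↔ N.det ≠ 0 := by
  simp [det_twistedCongr, hg]

def symplecticMatrix {R : Type*} [CommRing R] : Matrix (Fin 2) (Fin 2) R := !![0, 1; -1, 0]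

end Matrix

section FormPoly

variable {K : Type*} [Field K]

noncomputable def formPoly (q : ℕ) (N : Matrix (Fin 2) (Fin 2) K) : K[X] :=
  C (N 0 0) * X ^ (q + 1) + C (N 0 1) * X ^ q + C (N 1 0) * X + C (N 1 1)

theorem eval_formPoly (q : ℕ) (N : Matrix (Fin 2) (Fin 2) K) (r : K) :
    (formPoly q N).eval r = (r ^ q * N 0 0 + N 1 0) * r + (r ^ q * N 0 1 + N 1 1) := by
  simp only [formPoly, eval_add, eval_mul, eval_C, eval_pow, eval_X]
  ring

theorem formPoly_smul (q : ℕ) (e : K) (N : Matrix (Fin 2) (Fin 2) K) :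
    formPoly q (e • N) = C e * formPoly q N := by
  simp only [formPoly, Matrix.smul_apply, smul_eq_mul, C_mul]
  ring

variable {q : ℕ}

theorem coeff_formPoly_succ (hq : q ≠ 0) (N : Matrix (Fin 2) (Fin 2) K) :
    (formPoly q N).coeff (q + 1) = N 0 0 := by
  simp [formPoly, coeff_C, hq]

theorem coeff_formPoly_self (hq : 2 ≤ q) (N : Matrix (Fin 2) (Fin 2) K) :
    (formPoly q N).coeff q = N 0 1 := by
  simp [formPoly, coeff_X, coeff_C, show q ≠ 0 by omega, show 1 ≠ q by omega]

theorem coeff_formPoly_one (hq : 2 ≤ q) (N : Matrix (Fin 2) (Fin 2) K) :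
    (formPoly q N).coeff 1 = N 1 0 := by
  simp [formPoly, coeff_C, show q ≠ 0 by omega, show 1 ≠ q by omega]

theorem coeff_formPoly_zero (hq : q ≠ 0) (N : Matrix (Fin 2) (Fin 2) K) :
    (formPoly q N).coeff 0 = N 1 1 := by
  simp [formPoly, coeff_X, coeff_C, hq, Ne.symm hq]

theorem formPoly_injective (hq : 2 ≤ q) : Function.Injective (formPoly (K := K) q) := by
  intro M N h
  have hq₀ : q ≠ 0 := by omega
  have h00 := congrArg (coeff · (q + 1)) h
  have h01 := congrArg (coeff · q) h
  have h10 := congrArg (coeff · 1) h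
  have h11 := congrArg (coeff · 0) h
  simp only [coeff_formPoly_succ hq₀, coeff_formPoly_self hq, coeff_formPoly_one hq,
    coeff_formPoly_zero hq₀] at h00 h01 h10 h11
  rw [Matrix.eta_fin_two M, Matrix.eta_fin_two N, h00, h01, h10, h11]

theorem exists_eval_formPoly_eq_zero [IsAlgClosed K] (hq : 2 ≤ q)
    {N : Matrix (Fin 2) (Fin 2) K} (hN : N 0 0 ≠ 0 ∨ N 0 1 ≠ 0) :
    ∃ r, (formPoly q N).eval r = 0 := by
  suffices ∃ k, k ≠ 0 ∧ (formPoly q N).coeff k ≠ 0 by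
    obtain ⟨k, hk, hcoeff⟩ := this
    refine IsAlgClosed.exists_root _ fun hdeg => hk ?_
    simpa using (le_degree_of_ne_zero hcoeff).trans hdeg.le
  rcases hN with h | h
  · exact ⟨q + 1, by omega, by rwa [coeff_formPoly_succ (by omega)]⟩
  · exact ⟨q, by omega, by rwa [coeff_formPoly_self hq]⟩

end FormPoly

namespace Matrix

variable {K : Type*} [Field K] [IsAlgClosed K] {q : ℕ} {σ : K →+* K}

theorem exists_twistedCongr_apply_zero_zero_eq_zero (hq : 2 ≤ q) (hσ : ∀ x, σ x = x ^ q)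
    {N : Matrix (Fin 2) (Fin 2) K} (hN : N.det ≠ 0) :
    ∃ g : Matrix (Fin 2) (Fin 2) K, g.det ≠ 0 ∧ twistedCongr σ g N 0 0 = 0 := by
  have hN' : N 0 0 ≠ 0 ∨ N 0 1 ≠ 0 := by
    by_contra! h
    simp [det_fin_two, h] at hN
  obtain ⟨r, hr⟩ := exists_eval_formPoly_eq_zero hq hN'
  refine ⟨!![r, 1; 1, 0], by simp, ?_⟩
  rw [eval_formPoly] at hr
  simpa [twistedCongr, mul_apply, Fin.sum_univ_two, hσ] using hr

theorem exists_twistedCongr_eq_smul_symplecticMatrix_of_apply_zero_zero (hq : 2 ≤ q)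
    (hσ : ∀ x, σ x = x ^ q) {N : Matrix (Fin 2) (Fin 2) K} (hN : N.det ≠ 0)
    (hN₀ : N 0 0 = 0) : ∃ g : Matrix (Fin 2) (Fin 2) K, g.det ≠ 0 ∧
      ∃ t : K, t ≠ 0 ∧ twistedCongr σ g N = t • symplecticMatrix := by
  have hβγ : N 0 1 * N 1 0 ≠ 0 := by simpa [det_fin_two, hN₀] using hN
  obtain ⟨hβ, hγ⟩ := mul_ne_zero_iff.mp hβγ
  have hq₀ : q ≠ 0 := by omega
  obtain ⟨s, hs⟩ := exists_eval_formPoly_eq_zero hq (Or.inr hβ)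
  obtain ⟨u, hu⟩ := IsAlgClosed.exists_pow_nat_eq (-N 1 0 / N 0 1) (n := q - 1) (by omega)
  have hu₀ : u ≠ 0 := by
    rintro rfl
    rw [zero_pow (by omega)] at hu
    exact div_ne_zero (neg_ne_zero.mpr hγ) hβ hu.symm
  have hu_pow : N 1 0 * u = -(u ^ q * N 0 1) := by
    rw [← Nat.sub_add_cancel (show 1 ≤ q by omega), pow_succ, hu]
    field_simp
  rw [eval_formPoly, hN₀] at hs
  -- `s` kills the `(1, 1)` entry, and `u` makes the off-diagonal entries opposite.
  refine ⟨!![u, s; 0, 1], by simpa using hu₀, u ^ q * N 0 1,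
    mul_ne_zero (pow_ne_zero _ hu₀) hβ, ?_⟩
  ext i j
  fin_cases i <;> fin_cases j <;>
    simp [twistedCongr, symplecticMatrix, mul_apply, Fin.sum_univ_two, hσ, hN₀, hq₀]
  · exact hu_pow
  · linear_combination hs

theorem exists_twistedCongr_eq_smul_symplecticMatrix (hq : 2 ≤ q) (hσ : ∀ x, σ x = x ^ q)
    {N : Matrix (Fin 2) (Fin 2) K} (hN : N.det ≠ 0) : ∃ g : Matrix (Fin 2) (Fin 2) K,
      g.det ≠ 0 ∧ ∃ t : K, t ≠ 0 ∧ twistedCongr σ g N = t • symplecticMatrix := by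
  obtain ⟨g₁, hg₁, h₀⟩ := exists_twistedCongr_apply_zero_zero_eq_zero hq hσ hN
  obtain ⟨g₂, hg₂, t, ht, h⟩ := exists_twistedCongr_eq_smul_symplecticMatrix_of_apply_zero_zero
    hq hσ ((det_twistedCongr_ne_zero_iff σ hg₁ N).mpr hN) h₀
  refine ⟨g₁ * g₂, by rw [det_mul]; exact mul_ne_zero hg₁ hg₂, t, ht, ?_⟩
  rw [twistedCongr_mul, h]

theorem exists_smul_eq_twistedCongr_symplecticMatrix_iff (hq : 2 ≤ q) (hσ : ∀ x, σ x = x ^ q)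
    (N : Matrix (Fin 2) (Fin 2) K) :
    (∃ g : Matrix (Fin 2) (Fin 2) K, g.det ≠ 0 ∧
      ∃ e : K, e ≠ 0 ∧ e • N = twistedCongr σ g symplecticMatrix) ↔ N.det ≠ 0 := by
  constructor
  · rintro ⟨g, hg, e, he, h⟩
    have hJ : (symplecticMatrix : Matrix (Fin 2) (Fin 2) K).det ≠ 0 := by
      simp [symplecticMatrix]
    rw [← det_twistedCongr_ne_zero_iff σ hg, ← h, det_smul] at hJ
    exact right_ne_zero_of_mul hJ
  · intro hN
    obtain ⟨g, hg, t, ht, h⟩ := exists_twistedCongr_eq_smul_symplecticMatrix hq hσ hN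
    have hg_unit : IsUnit g.det := isUnit_iff_ne_zero.mpr hg
    refine ⟨g⁻¹, (isUnit_nonsing_inv_det g hg_unit).ne_zero, t⁻¹, inv_ne_zero ht, ?_⟩
    rw [← twistedCongr_one σ N, ← mul_nonsing_inv g hg_unit, twistedCongr_mul, h,
      twistedCongr_smul, inv_smul_smul₀ ht]

end Matrix

open Matrix in
theorem formPoly_twistedCongr_symplecticMatrix {K : Type*} [Field K] (p n : ℕ) [ExpChar K p]
    (a b c d : K) :
    formPoly (p ^ n) (twistedCongr (iterateFrobenius K p n) !![a, b; c, d] symplecticMatrix)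
      = (C a * X + C b) ^ p ^ n * (C c * X + C d)
        - (C a * X + C b) * (C c * X + C d) ^ p ^ n := by
  simp only [add_pow_expChar_pow, mul_pow, ← C_pow]
  simp [formPoly, twistedCongr, symplecticMatrix, mul_apply, Fin.sum_univ_two,
    iterateFrobenius_def]
  ring

open Matrix in
theorem orbit_of_xq_sub_x_general
    (p n : ℕ) (hp : p.Prime) (hn : n ≠ 0) (q : ℕ) (hq : q = p ^ n)
    (K : Type*) [Field K] [IsAlgClosed K] [CharP K p]
    (α β γ δ : K)
    (f : K[X]) (hf : f = C α * X ^ (q + 1) + C β * X ^ q + C γ * X + C δ) :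
    α * δ ≠ β * γ ↔
      ∃ a b c d e : K, a * d - b * c ≠ 0 ∧ e ≠ 0 ∧
        C e * f = (C a * X + C b) ^ q * (C c * X + C d)
                  - (C a * X + C b) * (C c * X + C d) ^ q := by
  have := Fact.mk hp
  subst hq
  have hq₂ : 2 ≤ p ^ n := hp.two_le.trans (Nat.le_self_pow hn p)
  have hfN : f = formPoly (p ^ n) !![α, β; γ, δ] := hf
  rw [← sub_ne_zero, ← det_fin_two_of, ← exists_smul_eq_twistedCongr_symplecticMatrix_iff hq₂
    (σ := iterateFrobenius K p n) (fun _ => iterateFrobenius_def ..)]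
  constructor
  · rintro ⟨g, hg, e, he, h⟩
    refine ⟨g 0 0, g 0 1, g 1 0, g 1 1, e, by rwa [← det_fin_two], he, ?_⟩
    rw [hfN, ← formPoly_smul, h, ← formPoly_twistedCongr_symplecticMatrix, ← eta_fin_two]
  · rintro ⟨a, b, c, d, e, hdet, he, h⟩
    refine ⟨!![a, b; c, d], by rwa [det_fin_two_of], e, he, formPoly_injective hq₂ ?_⟩
    rw [formPoly_smul, formPoly_twistedCongr_symplecticMatrix, ← hfN, h]

/-- over an algebraically closed `K ⊇ F_q`, a nonzero class
`f = α x^(q+1) + β x^q + γ x + δ` (up to scalar) lies off the quadric `αδ = βγ` iff it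
is in the `PGL₂(K)`-orbit of `x^q - x`, where `[[a,b],[c,d]] ⋆ (x^q - x) =
(ax+b)^q (cx+d) - (ax+b)(cx+d)^q`. -/
theorem orbit_of_xq_sub_x
    (p n : ℕ) (hp : p.Prime) (hn : n ≠ 0) (q : ℕ) (hq : q = p ^ n)
    (K : Type*) [Field K] [IsAlgClosed K] [CharP K p]
    (α β γ δ : K) (hne : ¬ (α = 0 ∧ β = 0 ∧ γ = 0 ∧ δ = 0))
    (f : K[X]) (hf : f = C α * X ^ (q + 1) + C β * X ^ q + C γ * X + C δ) :
    α * δ ≠ β * γ ↔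
      ∃ a b c d e : K, a * d - b * c ≠ 0 ∧ e ≠ 0 ∧
        C e * f = (C a * X + C b) ^ q * (C c * X + C d)
                  - (C a * X + C b) * (C c * X + C d) ^ q :=
  orbit_of_xq_sub_x_general p n hp hn q hq K α β γ δ f hf
end

section
/- Let q be a prime power, k a field containing F_q with |k| = q^e, and h_0, h_1 ∈ k[x]. Let Q ∈ k[x] be an irreducible quadratic coprime to h_1, with roots a_1 ≠ a_2 in the algebraic closure. Suppose that Q is not a degenerate trap, i.e. (h_0/h_1)(a_1) does not lie in the appropriate degree-1 subextension; that Q does not divide h_1 x^q - h_0; and that a_2 is not a root of h_1 x^{q^{e+1}} - h_0 (i.e. Q is not a trap of level e or 0). Setting b_1 = ((h_0/h_1)(a_2))^{1/q} and b_2 = ((h_0/h_1)(a_1))^{1/q}, the four elements a_1, a_2, b_1, b_2 are pairwise distinct. -/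
open Polynomial

/-- let `k` be a finite field with `q^e` elements (`q = p^n` a prime
power), `Q ∈ k[x]` an irreducible quadratic with distinct roots `a₁, a₂` in the
algebraic closure, with `h₁(aᵢ) ≠ 0`. If `Q` is not a degenerate trap
(`(h₀/h₁)(a₁) ∉ k`), not a trap of level 0 (`Q ∤ h₁ x^q - h₀`), and not a trap of level
`e` (`aᵢ` is not a root of `h₁ x^(q^(e+1)) - h₀`), then with `b₁ = ((h₀/h₁)(a₂))^(1/q)`
and `b₂ = ((h₀/h₁)(a₁))^(1/q)`, the four elements `a₁, a₂, b₁, b₂` are pairwise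
distinct. -/
theorem good_quadratic_four_distinct_roots
    (p n : ℕ) (hp : p.Prime) (hn : n ≠ 0) (q : ℕ) (hq : q = p ^ n)
    (k : Type*) [Field k] [Fintype k] [CharP k p]
    (e : ℕ) (hcard : Fintype.card k = q ^ e)
    (h₀ h₁ Q : k[X]) (hQirr : Irreducible Q) (hQdeg : Q.natDegree = 2)
    (a₁ a₂ : AlgebraicClosure k) (ha₁ : aeval a₁ Q = 0) (ha₂ : aeval a₂ Q = 0)
    (ha : a₁ ≠ a₂)
    (hh₁ : aeval a₁ h₁ ≠ 0) (hh₂ : aeval a₂ h₁ ≠ 0)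
    (hdegen : aeval a₁ h₀ / aeval a₁ h₁ ∉ Set.range (algebraMap k (AlgebraicClosure k)))
    (hlev0 : ¬ Q ∣ (h₁ * X ^ q - h₀))
    (hlev₁ : aeval a₁ (h₁ * X ^ (q ^ (e + 1)) - h₀) ≠ 0)
    (hlev₂ : aeval a₂ (h₁ * X ^ (q ^ (e + 1)) - h₀) ≠ 0)
    (b₁ b₂ : AlgebraicClosure k)
    (hb₁ : b₁ ^ q = aeval a₂ h₀ / aeval a₂ h₁)
    (hb₂ : b₂ ^ q = aeval a₁ h₀ / aeval a₁ h₁) :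
    a₁ ≠ a₂ ∧ a₁ ≠ b₁ ∧ a₁ ≠ b₂ ∧ a₂ ≠ b₁ ∧ a₂ ≠ b₂ ∧ b₁ ≠ b₂ := by
  classical
  haveI := Fact.mk hp
  set N : ℕ := q ^ e with hN
  have hNp : N = p ^ (n * e) := by rw [hN, hq, pow_mul]
  have hNlt : 1 < N := by
    have := Fintype.one_lt_card (α := k)
    rwa [hcard] at this
  have hN0 : N ≠ 0 := by omega
  -- coefficients are fixed by the `N`-power Frobenius
  have hcoeff : ∀ c : k, (algebraMap k (AlgebraicClosure k) c) ^ N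
      = algebraMap k (AlgebraicClosure k) c := by
    intro c
    rw [← map_pow, ← hcard, FiniteField.pow_card]
  -- the `N`-power map commutes with `aeval`
  have hB : ∀ (h : k[X]) (a : AlgebraicClosure k), (aeval a h) ^ N = aeval (a ^ N) h := by
    intro h a
    have hcomp : (iterateFrobenius (AlgebraicClosure k) p (n * e)).comp
        (algebraMap k (AlgebraicClosure k)) = algebraMap k (AlgebraicClosure k) := by
      ext c
      rw [RingHom.comp_apply, iterateFrobenius_def, ← hNp, hcoeff]
    have key := Polynomial.hom_eval₂ h (algebraMap k (AlgebraicClosure k))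
      (iterateFrobenius (AlgebraicClosure k) p (n * e)) a
    rw [hcomp, iterateFrobenius_def, iterateFrobenius_def, ← hNp] at key
    rw [aeval_def, aeval_def]
    exact key
  -- fixed points of the `N`-power Frobenius are exactly the image of `k`
  have hA : ∀ x : AlgebraicClosure k, x ^ N = x
      → x ∈ Set.range (algebraMap k (AlgebraicClosure k)) := by
    intro x hx
    have hf0 : (X ^ N - X : (AlgebraicClosure k)[X]) ≠ 0 :=
      FiniteField.X_pow_card_sub_X_ne_zero (AlgebraicClosure k) hNlt
    set T : Finset (AlgebraicClosure k) := (X ^ N - X : (AlgebraicClosure k)[X]).roots.toFinset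
      with hT
    have himg : (Finset.univ.image (algebraMap k (AlgebraicClosure k))) ⊆ T := by
      intro y hy
      simp only [Finset.mem_image] at hy
      obtain ⟨c, -, rfl⟩ := hy
      rw [hT, Multiset.mem_toFinset, mem_roots hf0]
      simp only [IsRoot, eval_sub, eval_pow, eval_X, sub_eq_zero, hcoeff c]
    have hcardT : T.card ≤ N := by
      calc T.card ≤ Multiset.card (X ^ N - X : (AlgebraicClosure k)[X]).roots :=
            Multiset.toFinset_card_le _
        _ ≤ (X ^ N - X : (AlgebraicClosure k)[X]).natDegree :=
            (X ^ N - X : (AlgebraicClosure k)[X]).card_roots'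
        _ = N := FiniteField.X_pow_card_sub_X_natDegree_eq (AlgebraicClosure k) hNlt
    have hcardimg : (Finset.univ.image (algebraMap k (AlgebraicClosure k))).card = N := by
      rw [Finset.card_image_of_injective _ (algebraMap k (AlgebraicClosure k)).injective,
        Finset.card_univ, hcard]
    have heq : (Finset.univ.image (algebraMap k (AlgebraicClosure k))) = T :=
      Finset.eq_of_subset_of_card_le himg (by rw [hcardimg]; exact hcardT)
    have hxT : x ∈ T := by
      rw [hT, Multiset.mem_toFinset, mem_roots hf0]
      simp only [IsRoot, eval_sub, eval_pow, eval_X, sub_eq_zero, hx]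
    rw [← heq] at hxT
    simp only [Finset.mem_image] at hxT
    obtain ⟨c, -, hc⟩ := hxT
    exact ⟨c, hc⟩
  -- roots of Q do not lie in (the image of) k
  have hnok : ∀ x : AlgebraicClosure k, aeval x Q = 0
      → x ∉ Set.range (algebraMap k (AlgebraicClosure k)) := by
    rintro x hx ⟨c, rfl⟩
    have hceval : eval c Q = 0 := by
      apply (algebraMap k (AlgebraicClosure k)).injective
      rw [map_zero, ← aeval_algebraMap_apply_eq_algebraMap_eval, hx]
    have hdvd : (X - C c) ∣ Q := dvd_iff_isRoot.mpr hceval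
    obtain ⟨t, ht⟩ := hdvd
    rcases hQirr.isUnit_or_isUnit ht with hu | hu
    · exact Polynomial.not_isUnit_X_sub_C c hu
    · have ht0 : t ≠ 0 := fun h0 => hQirr.ne_zero (by rw [ht, h0, mul_zero])
      have : Q.natDegree = 1 := by
        rw [ht, natDegree_mul (X_sub_C_ne_zero c) ht0, natDegree_X_sub_C,
          Polynomial.natDegree_eq_zero_of_isUnit hu]
      omega
  -- the two roots of Q are conjugate under the N-power Frobenius
  have hconj : ∀ x y : AlgebraicClosure k, aeval x Q = 0 → aeval y Q = 0 → x ≠ y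
      → x ^ N = y := by
    intro x y hx hy hxy
    have hxN : aeval (x ^ N) Q = 0 := by rw [← hB, hx, zero_pow hN0]
    have hne : x ^ N ≠ x := fun h => hnok x hx (hA x h)
    by_contra hne2
    have hQm0 : Q.map (algebraMap k (AlgebraicClosure k)) ≠ 0 :=
      (Polynomial.map_ne_zero_iff (algebraMap k (AlgebraicClosure k)).injective).mpr hQirr.ne_zero
    have hmem : ∀ z : AlgebraicClosure k, aeval z Q = 0
        → z ∈ (Q.map (algebraMap k (AlgebraicClosure k))).roots.toFinset := by
      intro z hz
      rw [Multiset.mem_toFinset, mem_roots hQm0, IsRoot, eval_map, ← aeval_def, hz]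
    have hsub : ({x, y, x ^ N} : Finset (AlgebraicClosure k))
        ⊆ (Q.map (algebraMap k (AlgebraicClosure k))).roots.toFinset := by
      intro z hz
      simp only [Finset.mem_insert, Finset.mem_singleton] at hz
      rcases hz with rfl | rfl | rfl
      · exact hmem _ hx
      · exact hmem _ hy
      · exact hmem _ hxN
    have hcard3 : ({x, y, x ^ N} : Finset (AlgebraicClosure k)).card = 3 := by
      rw [Finset.card_insert_of_notMem (by simp [hxy, Ne.symm hne]),
        Finset.card_insert_of_notMem
          (by simp only [Finset.mem_singleton]; exact fun h => hne2 h.symm),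
        Finset.card_singleton]
    have h3 : 3 ≤ (Q.map (algebraMap k (AlgebraicClosure k))).roots.toFinset.card :=
      hcard3 ▸ Finset.card_le_card hsub
    have h2 : (Q.map (algebraMap k (AlgebraicClosure k))).roots.toFinset.card ≤ 2 := by
      calc (Q.map (algebraMap k (AlgebraicClosure k))).roots.toFinset.card
          ≤ Multiset.card (Q.map (algebraMap k (AlgebraicClosure k))).roots :=
            Multiset.toFinset_card_le _
        _ ≤ (Q.map (algebraMap k (AlgebraicClosure k))).natDegree :=
            (Q.map (algebraMap k (AlgebraicClosure k))).card_roots'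
        _ = 2 := by rw [natDegree_map, hQdeg]
    omega
  have h12 : a₁ ^ N = a₂ := hconj a₁ a₂ ha₁ ha₂ ha
  have h21 : a₂ ^ N = a₁ := hconj a₂ a₁ ha₂ ha₁ ha.symm
  -- minimal polynomial argument: Q divides anything vanishing at a root of Q
  have hdvdQ : ∀ (x : AlgebraicClosure k) (P : k[X]), aeval x Q = 0 → aeval x P = 0
      → Q ∣ P := by
    intro x P hx hP
    have hint : IsIntegral k x := (IsAlgebraic.isIntegral ⟨Q, hQirr.ne_zero, hx⟩)
    have h1 : minpoly k x ∣ Q := minpoly.dvd k x hx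
    have h2 : minpoly k x ∣ P := minpoly.dvd k x hP
    exact ((minpoly.irreducible hint).associated_of_dvd hQirr h1).symm.dvd.trans h2
  have hq1 : q ^ (e + 1) = q * N := by rw [hN, pow_succ, mul_comm]
  refine ⟨ha, ?_, ?_, ?_, ?_, ?_⟩
  · -- a₁ ≠ b₁
    intro h
    apply hlev₁
    have h1 : a₁ ^ q = aeval a₂ h₀ / aeval a₂ h₁ := by rw [h, hb₁]
    have h2 : a₁ ^ (q ^ (e + 1)) = aeval a₁ h₀ / aeval a₁ h₁ := by
      rw [hq1, pow_mul, h1, div_pow, hB, hB, h21]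
    have hmul : aeval a₁ h₁ * a₁ ^ (q ^ (e + 1)) = aeval a₁ h₀ := by
      rw [h2, mul_comm, div_mul_cancel₀ _ hh₁]
    have hev : aeval a₁ (h₁ * X ^ q ^ (e + 1) - h₀)
        = aeval a₁ h₁ * a₁ ^ q ^ (e + 1) - aeval a₁ h₀ := by simp
    rw [hev, hmul, sub_self]
  · -- a₁ ≠ b₂
    intro h
    apply hlev0
    apply hdvdQ a₁ _ ha₁
    have h1 : a₁ ^ q = aeval a₁ h₀ / aeval a₁ h₁ := by rw [← h] at hb₂; exact hb₂
    have hmul : aeval a₁ h₁ * a₁ ^ q = aeval a₁ h₀ := by rw [h1, mul_comm, div_mul_cancel₀ _ hh₁]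
    have hev : aeval a₁ (h₁ * X ^ q - h₀) = aeval a₁ h₁ * a₁ ^ q - aeval a₁ h₀ := by simp
    rw [hev, hmul, sub_self]
  · -- a₂ ≠ b₁
    intro h
    apply hlev0
    apply hdvdQ a₂ _ ha₂
    have h1 : a₂ ^ q = aeval a₂ h₀ / aeval a₂ h₁ := by rw [← h] at hb₁; exact hb₁
    have hmul : aeval a₂ h₁ * a₂ ^ q = aeval a₂ h₀ := by rw [h1, mul_comm, div_mul_cancel₀ _ hh₂]
    have hev : aeval a₂ (h₁ * X ^ q - h₀) = aeval a₂ h₁ * a₂ ^ q - aeval a₂ h₀ := by simp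
    rw [hev, hmul, sub_self]
  · -- a₂ ≠ b₂
    intro h
    apply hlev₂
    have h1 : a₂ ^ q = aeval a₁ h₀ / aeval a₁ h₁ := by rw [h, hb₂]
    have h2 : a₂ ^ (q ^ (e + 1)) = aeval a₂ h₀ / aeval a₂ h₁ := by
      rw [hq1, pow_mul, h1, div_pow, hB, hB, h12]
    have hmul : aeval a₂ h₁ * a₂ ^ (q ^ (e + 1)) = aeval a₂ h₀ := by
      rw [h2, mul_comm, div_mul_cancel₀ _ hh₂]
    have hev : aeval a₂ (h₁ * X ^ q ^ (e + 1) - h₀)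
        = aeval a₂ h₁ * a₂ ^ q ^ (e + 1) - aeval a₂ h₀ := by simp
    rw [hev, hmul, sub_self]
  · -- b₁ ≠ b₂
    intro hbb
    apply hdegen
    apply hA
    have hstep : (aeval a₁ h₀ / aeval a₁ h₁) ^ N = aeval a₂ h₀ / aeval a₂ h₁ := by
      rw [div_pow, hB, hB, h12]
    rw [hstep, ← hb₁, hbb, hb₂]
end

section
/- Let q be a prime power and K an algebraically closed field containing F_q. If f(x) = α x^{q+1} + β x^q + γ x + δ with αδ ≠ βγ, then f has no root of multiplicity ≥ 2 in K ∪ {∞} (where a root at ∞ of multiplicity ≥ 2 means deg f ≤ q - 1); equivalently, f has q+1 distinct roots in P^1(K). -/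
open Polynomial

/-- over an algebraically closed `K ⊇ F_q`, a polynomial
`f = α x^(q+1) + β x^q + γ x + δ` with `αδ ≠ βγ` has `q+1` distinct roots in `P¹(K)`:
its finite roots are simple, the root at infinity (of multiplicity `q + 1 - deg f`) is
at most simple (i.e. `deg f ≥ q`), and the total count is `q + 1`. -/
theorem off_quadric_has_distinct_projective_roots
    (p n : ℕ) (hp : p.Prime) (hn : n ≠ 0) (q : ℕ) (hq : q = p ^ n)
    (K : Type*) [Field K] [IsAlgClosed K] [CharP K p]
    (α β γ δ : K)
    (f : K[X]) (hf : f = C α * X ^ (q + 1) + C β * X ^ q + C γ * X + C δ)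
    (hS : α * δ ≠ β * γ) :
    f.roots.Nodup ∧ q ≤ f.natDegree ∧
      Multiset.card f.roots + (q + 1 - f.natDegree) = q + 1 := by
  have hq2 : 2 ≤ q := by
    rw [hq]
    calc 2 ≤ p := hp.two_le
    _ = p ^ 1 := (pow_one p).symm
    _ ≤ p ^ n := Nat.pow_le_pow_right hp.pos (Nat.one_le_iff_ne_zero.mpr hn)
  have hqK : (q : K) = 0 := by
    rw [hq, Nat.cast_pow, CharP.cast_eq_zero K p, zero_pow hn]
  -- derivative computation
  have hder : derivative f = C α * X ^ q + C γ := by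
    subst hf
    simp [derivative_X_pow, hqK]
  -- separability
  have hsep : f.Separable := by
    rw [Separable, Polynomial.isCoprime_iff_aeval_ne_zero_of_isAlgClosed K K]
    intro a
    by_contra h
    push_neg at h
    obtain ⟨h2, h1⟩ := h
    rw [hder] at h1
    simp only [map_add, map_mul, map_pow, aeval_C, aeval_X, Algebra.algebraMap_self_apply] at h1 h2
    rw [hf] at h2
    simp only [map_add, map_mul, map_pow, aeval_C, aeval_X, Algebra.algebraMap_self_apply] at h2
    have h3 : β * a ^ q + δ = 0 := by linear_combination h2 - a * h1
    exact hS (by linear_combination α * h3 - β * h1)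
  have hαβ : α ≠ 0 ∨ β ≠ 0 := by
    by_contra h
    push_neg at h
    exact hS (by rw [h.1, h.2]; ring)
  -- degree bounds
  have hdle : f.natDegree ≤ q + 1 := by
    rw [hf]
    compute_degree
  have hdge : q ≤ f.natDegree := by
    rcases hαβ with hα | hβ
    · have : f.coeff (q + 1) = α := by
        rw [hf]
        simp [coeff_X, coeff_C, Nat.ne_of_gt (show 1 < q + 1 by omega), (show q + 1 ≠ 0 by omega), (show q ≠ 0 by omega)]
      have := le_natDegree_of_ne_zero (this ▸ hα)
      omega
    · have : f.coeff q = β := by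
        rw [hf]
        rw [coeff_add, coeff_add, coeff_add]
        simp [coeff_X, coeff_C, coeff_X_pow, (show ¬(1 = q) by omega),
          (show q ≠ q + 1 by omega), (show q ≠ 0 by omega)]
      exact le_natDegree_of_ne_zero (this ▸ hβ)
  have hf0 : f ≠ 0 := by
    intro h
    rw [h] at hdge
    simp at hdge
    omega
  have hcard : Multiset.card f.roots = f.natDegree :=
    (splits_iff_card_roots.mp (IsAlgClosed.splits f))
  exact ⟨nodup_roots hsep, hdge, by omega⟩
end
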